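/- Let n ≥ 3 and let λ_1 < λ_2 < ⋯ < λ_n be pairwise distinct reals, and let M be the fundamental B-spline with knots λ_1, …, λ_n. Then for every natural number k ≥ 1, the k-th raw moment satisfies ∫_{-∞}^{∞} t^k · M(t) dt = (k! · (n−1)!/(n+k−1)!) · Σ_{β} λ_1^{β_1} ⋯ λ_n^{β_n}, where the sum runs over all multi-indices β ∈ ℕⁿ with β_1 + ⋯ + β_n = k. -/

import Mathlib

/-!
Below the smallest knot `a` every truncated power `(λᵢ - t)₊^(n-2)` is a polynomial of degree
`n - 2` in the knot, so the divided difference over the `n` knots kills it and `M` vanishes there.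
Hence `∫ tᵏ M(t) dt` is `n - 1` times the divided difference of `c ↦ ∫_a^c tᵏ (c - t)^(n-2) dt`.
Splitting `∫_a^c = ∫_0^c - ∫_0^a`, the first part is the Beta integral
`k! (n-2)! / (n+k-1)! · c^(n+k-1)` and the second is a polynomial of degree `≤ n - 2` in `c`,
again killed. Finally, the divided difference of `c^(n-1+k)` is the complete homogeneous
polynomial `h_k(λ)`: both satisfy the recursion `D_{k+1}(λ) = λ_a D_k(λ) + D_{k+1}(λ ∖ λ_a)`.
-/

open MeasureTheory

/-- The fundamental B-spline with knots `lam 0, …, lam (n-1)`. -/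
noncomputable def fundamentalBSpline (n : ℕ) (lam : Fin n → ℝ) (u : ℝ) : ℝ :=
  ((n : ℝ) - 1) * ∑ k : Fin n,
    max (lam k - u) 0 ^ (n - 2) / ∏ i ∈ Finset.univ.erase k, (lam k - lam i)

open Finset Polynomial
open scoped Nat

section CompleteHomogeneous

variable {ι R : Type*} [DecidableEq ι] [CommSemiring R]

noncomputable def completeHomogeneous (s : Finset ι) (v : ι → R) (k : ℕ) : R :=
  ∑ β ∈ piAntidiag s k, ∏ i ∈ s, v i ^ β i

variable (v : ι → R)

@[simp] lemma completeHomogeneous_zero (s : Finset ι) : completeHomogeneous s v 0 = 1 := by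
  simp [completeHomogeneous]

@[simp] lemma completeHomogeneous_empty_succ (k : ℕ) :
    completeHomogeneous (∅ : Finset ι) v (k + 1) = 0 := by
  simp [completeHomogeneous]

lemma completeHomogeneous_cons {a : ι} {s : Finset ι} (ha : a ∉ s) (k : ℕ) :
    completeHomogeneous (cons a s ha) v k =
      ∑ p ∈ antidiagonal k, v a ^ p.1 * completeHomogeneous s v p.2 := by
  rw [completeHomogeneous, piAntidiag_cons, sum_disjiUnion]
  refine sum_congr rfl fun p _ => ?_
  rw [sum_map, completeHomogeneous, mul_sum]
  refine sum_congr rfl fun β hβ => ?_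
  have hβa : β a = 0 := by
    by_contra h
    exact ha ((mem_piAntidiag.mp hβ).2 a h)
  rw [prod_cons]
  simp only [addRightEmbedding_apply, Pi.add_apply, hβa, zero_add]
  congr 1
  refine prod_congr rfl fun i hi => ?_
  rw [if_neg (ne_of_mem_of_not_mem hi ha), add_zero]

lemma completeHomogeneous_cons_succ {a : ι} {s : Finset ι} (ha : a ∉ s) (k : ℕ) :
    completeHomogeneous (cons a s ha) v (k + 1) =
      v a * completeHomogeneous (cons a s ha) v k + completeHomogeneous s v (k + 1) := by
  simp only [completeHomogeneous_cons, Nat.sum_antidiagonal_succ, mul_sum, pow_succ]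
  rw [add_comm]
  simp only [pow_zero, one_mul, mul_assoc, mul_comm (v a)]

end CompleteHomogeneous

section DividedDifference

variable {ι F : Type*} [DecidableEq ι] [Field F]

def dividedDifference (s : Finset ι) (v : ι → F) : (F → F) →ₗ[F] F where
  toFun f := ∑ i ∈ s, f (v i) / ∏ j ∈ s.erase i, (v i - v j)
  map_add' f g := by simp only [Pi.add_apply, add_div, sum_add_distrib]
  map_smul' c f := by
    simp only [Pi.smul_apply, smul_eq_mul, mul_div_assoc, ← mul_sum, RingHom.id_apply]

lemma dividedDifference_apply (s : Finset ι) (v : ι → F) (f : F → F) :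
    dividedDifference s v f = ∑ i ∈ s, f (v i) / ∏ j ∈ s.erase i, (v i - v j) := rfl

@[simp] lemma dividedDifference_empty (v : ι → F) : dividedDifference ∅ v = 0 := rfl

variable {s : Finset ι} {v : ι → F}

lemma dividedDifference_congr {f g : F → F} (hfg : ∀ i ∈ s, f (v i) = g (v i)) :
    dividedDifference s v f = dividedDifference s v g :=
  sum_congr rfl fun i hi => by rw [hfg i hi]

lemma dividedDifference_eval (hv : Set.InjOn v s) {P : F[X]} (hP : P.degree < #s) :
    dividedDifference s v P.eval = P.coeff (#s - 1) :=
  (Lagrange.coeff_eq_sum hv hP).symm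

lemma dividedDifference_eval_eq_zero (hv : Set.InjOn v s) {P : F[X]}
    (hP : P.natDegree + 1 < #s) : dividedDifference s v P.eval = 0 := by
  have hdeg : P.degree < #s :=
    degree_le_natDegree.trans_lt (by exact_mod_cast (by omega : P.natDegree < #s))
  rw [dividedDifference_eval hv hdeg, coeff_eq_zero_of_natDegree_lt (by omega)]

lemma dividedDifference_id_mul (hv : Set.InjOn v s) {a : ι} (ha : a ∈ s) (f : F → F) :
    dividedDifference s v (fun x => x * f x) =
      v a * dividedDifference s v f + dividedDifference (s.erase a) v f := by
  rw [← sub_eq_iff_eq_add', dividedDifference_apply, dividedDifference_apply, mul_sum,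
    ← sum_sub_distrib, ← sum_erase_add _ _ ha, mul_div_assoc, sub_self, add_zero]
  refine sum_congr rfl fun i hi => ?_
  obtain ⟨hia, his⟩ := mem_erase.mp hi
  have hvia : v i - v a ≠ 0 := sub_ne_zero.mpr fun h => hia (hv his ha h)
  rw [← mul_prod_erase _ _ (mem_erase.mpr ⟨hia.symm, ha⟩), erase_right_comm, ← mul_div_assoc,
    ← sub_div, ← sub_mul, mul_div_mul_left _ _ hvia]

lemma dividedDifference_pow_card_sub_one_add (hv : Set.InjOn v s) (hs : s.Nonempty) (k : ℕ) :
    dividedDifference s v (· ^ (#s - 1 + k)) = completeHomogeneous s v k := by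
  induction s using Finset.cons_induction generalizing k with
  | empty => exact absurd hs not_nonempty_empty
  | cons a t ha ih =>
    rw [card_cons, Nat.add_sub_cancel]
    induction k with
    | zero =>
      have hX : (X ^ #t : F[X]).degree < #(cons a t ha) := by
        rw [degree_X_pow, card_cons]
        exact_mod_cast Nat.lt_succ_self _
      have h := dividedDifference_eval hv hX
      simp only [eval_X_pow, card_cons, Nat.add_sub_cancel, coeff_X_pow_self] at h
      rw [Nat.add_zero, completeHomogeneous_zero, ← h]
    | succ k ihk =>
      have hstep := dividedDifference_id_mul hv (mem_cons_self a t) (· ^ (#t + k))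
      simp only [erase_cons, ← pow_succ'] at hstep
      rw [← add_assoc, hstep, ihk, completeHomogeneous_cons_succ]
      congr 1
      rcases t.eq_empty_or_nonempty with rfl | ht
      · simp
      · rw [show #t + k = #t - 1 + (k + 1) by have := ht.card_pos; omega,
          ih (hv.mono (by simp)) ht]

end DividedDifference

lemma integral_dividedDifference {ι : Type*} [DecidableEq ι] {s : Finset ι} {v : ι → ℝ}
    {F : ℝ → ℝ → ℝ} (hF : ∀ i ∈ s, Integrable (F (v i))) :
    ∫ t, dividedDifference s v (fun c => F c t) = dividedDifference s v (fun c => ∫ t, F c t) := by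
  simp only [dividedDifference_apply]
  rw [integral_finsetSum _ fun i hi => (hF i hi).div_const _]
  simp_rw [integral_div]

lemma integral_indicator_Icc {E : Type*} [NormedAddCommGroup E] [NormedSpace ℝ E] {f : ℝ → E}
    {a c : ℝ} (hac : a ≤ c) : ∫ t, (Set.Icc a c).indicator f t = ∫ t in a..c, f t := by
  rw [integral_indicator measurableSet_Icc, integral_Icc_eq_integral_Ioc,
    intervalIntegral.integral_of_le hac]

lemma integral_pow_mul_sub_pow (k m : ℕ) (c : ℝ) :
    ∫ t in 0..c, t ^ k * (c - t) ^ m = (k ! * m ! / (k + m + 1)! : ℝ) * c ^ (k + m + 1) := by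
  induction m generalizing k with
  | zero =>
    simp only [pow_zero, mul_one, integral_pow, add_zero, Nat.factorial_zero, Nat.cast_one,
      Nat.factorial_succ, Nat.cast_mul, Nat.cast_add]
    field_simp
    simp
  | succ m ih =>
    have hu : ∀ x ∈ Set.uIcc 0 c,
        HasDerivAt (fun t => (c - t) ^ (m + 1)) (-((m + 1 : ℝ) * (c - x) ^ m)) x := fun x _ => by
      simpa using ((hasDerivAt_id x).const_sub c).fun_pow (m + 1)
    have hv : ∀ x ∈ Set.uIcc 0 c,
        HasDerivAt (fun t : ℝ => t ^ (k + 1) / (k + 1)) (x ^ k) x := fun x _ => by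
      have h := (hasDerivAt_pow (k + 1) x).div_const ((k : ℝ) + 1)
      rwa [Nat.add_sub_cancel, Nat.cast_succ, mul_div_cancel_left₀ _ (by positivity)] at h
    have hibp := intervalIntegral.integral_mul_deriv_eq_deriv_mul hu hv
      ((by fun_prop : Continuous _).intervalIntegrable _ _)
      ((by fun_prop : Continuous _).intervalIntegrable _ _)
    simp only [sub_self, zero_pow (Nat.succ_ne_zero _), zero_mul, sub_zero, zero_div,
      mul_zero] at hibp
    calc ∫ t in 0..c, t ^ k * (c - t) ^ (m + 1)
        = ∫ t in 0..c, (c - t) ^ (m + 1) * t ^ k := by simp only [mul_comm]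
      _ = (m + 1) / (k + 1) * ∫ t in 0..c, t ^ (k + 1) * (c - t) ^ m := by
        rw [hibp, zero_sub, ← intervalIntegral.integral_const_mul,
          ← intervalIntegral.integral_neg]
        congr 1; ext t; ring
      _ = _ := by
        rw [ih, show k + 1 + m + 1 = k + (m + 1) + 1 by ring, Nat.factorial_succ k,
          Nat.factorial_succ m]
        push_cast
        field_simp

lemma exists_polynomial_integral_mul_sub_pow {g : ℝ → ℝ} (hg : Continuous g) (a b : ℝ) (m : ℕ) :
    ∃ Q : ℝ[X], Q.natDegree ≤ m ∧ ∀ c, ∫ t in a..b, g t * (c - t) ^ m = Q.eval c := by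
  refine ⟨∑ j ∈ range (m + 1), C (∫ t in a..b, g t * ((-t) ^ (m - j) * m.choose j)) * X ^ j,
    natDegree_sum_le_of_forall_le _ _ fun j hj => ?_, fun c => ?_⟩
  · exact natDegree_C_mul_X_pow_le _ _ |>.trans (Nat.lt_succ_iff.mp (mem_range.mp hj))
  · simp only [eval_finsetSum, eval_C_mul, eval_X_pow, sub_eq_add_neg c, add_pow, mul_sum]
    rw [intervalIntegral.integral_finsetSum fun j _ =>
      ((by fun_prop : Continuous _).intervalIntegrable _ _)]
    refine sum_congr rfl fun j _ => ?_
    rw [← intervalIntegral.integral_mul_const]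
    congr 1; ext t; ring

lemma exists_polynomial_integral_pow_mul_sub_pow (k m : ℕ) (a : ℝ) :
    ∃ Q : ℝ[X], Q.natDegree ≤ m ∧ ∀ c, ∫ t in a..c, t ^ k * (c - t) ^ m =
      (k ! * m ! / (k + m + 1)! : ℝ) * c ^ (k + m + 1) - Q.eval c := by
  obtain ⟨Q, hQdeg, hQ⟩ := exists_polynomial_integral_mul_sub_pow (continuous_pow k) 0 a m
  refine ⟨Q, hQdeg, fun c => ?_⟩
  rw [← intervalIntegral.integral_interval_sub_left
    ((by fun_prop : Continuous _).intervalIntegrable _ _)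
    ((by fun_prop : Continuous _).intervalIntegrable _ _), integral_pow_mul_sub_pow, hQ]

lemma max_sub_pow_eq_indicator {m : ℕ} (hm : m ≠ 0) {a c t : ℝ} (ht : a ≤ t) :
    max (c - t) 0 ^ m = (Set.Icc a c).indicator (fun t => (c - t) ^ m) t := by
  by_cases htc : t ≤ c
  · rw [Set.indicator_of_mem (Set.mem_Icc.mpr ⟨ht, htc⟩), max_eq_left (sub_nonneg.mpr htc)]
  · rw [Set.indicator_of_notMem fun h => htc h.2, max_eq_right (by linarith), zero_pow hm]

section FundamentalBSpline

variable {n : ℕ} {lam : Fin n → ℝ}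

lemma fundamentalBSpline_eq_dividedDifference (u : ℝ) :
    fundamentalBSpline n lam u =
      (n - 1) * dividedDifference univ lam (fun c => max (c - u) 0 ^ (n - 2)) := rfl

lemma fundamentalBSpline_eq_zero_of_le (hn : 2 ≤ n) (hlam : Function.Injective lam) {u : ℝ}
    (hu : ∀ i, u ≤ lam i) : fundamentalBSpline n lam u = 0 := by
  have hnodes : ∀ i ∈ univ, max (lam i - u) 0 ^ (n - 2) = ((X - C u) ^ (n - 2)).eval (lam i) :=
    fun i _ => by rw [max_eq_left (sub_nonneg.mpr (hu i)), eval_pow, eval_sub, eval_X, eval_C]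
  have hdeg : ((X - C u) ^ (n - 2)).natDegree + 1 < #(univ : Finset (Fin n)) := by
    rw [natDegree_pow, natDegree_X_sub_C, card_fin]
    omega
  rw [fundamentalBSpline_eq_dividedDifference,
    dividedDifference_congr (g := fun c => ((X - C u) ^ (n - 2)).eval c) hnodes,
    dividedDifference_eval_eq_zero hlam.injOn hdeg, mul_zero]

lemma integral_mul_fundamentalBSpline (hn : 3 ≤ n) (hlam : Function.Injective lam) {a : ℝ}
    (ha : ∀ i, a ≤ lam i) {g : ℝ → ℝ} (hg : Continuous g) :
    ∫ t, g t * fundamentalBSpline n lam t =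
      (n - 1) * dividedDifference univ lam (fun c => ∫ t in a..c, g t * (c - t) ^ (n - 2)) := by
  have hpt : ∀ t, g t * fundamentalBSpline n lam t = (n - 1) * dividedDifference univ lam
      (fun c => (Set.Icc a c).indicator (fun t => g t * (c - t) ^ (n - 2)) t) := by
    intro t
    rcases lt_or_ge t a with hta | hat
    · have hzero : (fun c => (Set.Icc a c).indicator (fun t => g t * (c - t) ^ (n - 2)) t) = 0 :=
        funext fun c => Set.indicator_of_notMem (fun h => (h.1.trans_lt hta).false) _
      rw [fundamentalBSpline_eq_zero_of_le (by omega) hlam fun i => hta.le.trans (ha i), hzero,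
        map_zero, mul_zero, mul_zero]
    · simp_rw [fundamentalBSpline_eq_dividedDifference, mul_left_comm (g t), ← smul_eq_mul (g t),
        ← map_smul, Set.indicator_mul_right, max_sub_pow_eq_indicator (by omega : n - 2 ≠ 0) hat]
      rfl
  have hint : ∀ i ∈ univ, Integrable fun t =>
      (Set.Icc a (lam i)).indicator (fun t => g t * (lam i - t) ^ (n - 2)) t := fun i _ =>
    ((by fun_prop : Continuous _).integrableOn_Icc).integrable_indicator measurableSet_Icc
  simp_rw [hpt, integral_const_mul]
  rw [integral_dividedDifference hint]
  congr 1
  exact dividedDifference_congr fun i _ => integral_indicator_Icc (ha i)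

end FundamentalBSpline

theorem fundamentalBSpline_raw_moment_general
    (n : ℕ) (hn : 3 ≤ n) (lam : Fin n → ℝ) (hlam : StrictMono lam) (k : ℕ) :
    (∫ t : ℝ, t ^ k * fundamentalBSpline n lam t)
      = ((Nat.factorial k * Nat.factorial (n - 1) : ℝ) / Nat.factorial (n + k - 1)) *
          ∑ β ∈ Finset.Nat.antidiagonalTuple n k, ∏ i : Fin n, lam i ^ β i := by
  have hv : Set.InjOn lam (univ : Finset (Fin n)) := hlam.injective.injOn
  set a := lam ⟨0, by omega⟩
  have ha : ∀ i, a ≤ lam i := fun i => hlam.monotone (Nat.zero_le i.val)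
  obtain ⟨Q, hQdeg, hQ⟩ := exists_polynomial_integral_pow_mul_sub_pow k (n - 2) a
  have hmoment : (fun c => ∫ t in a..c, t ^ k * (c - t) ^ (n - 2)) =
      (k ! * (n - 2)! / (n + k - 1)! : ℝ) • (· ^ (n - 1 + k)) - Q.eval := by
    funext c
    rw [hQ, show k + (n - 2) + 1 = n - 1 + k by omega, show n + k - 1 = n - 1 + k by omega]
    rfl
  have hpow := dividedDifference_pow_card_sub_one_add hv ⟨⟨0, by omega⟩, mem_univ _⟩ k
  rw [card_fin, completeHomogeneous, piAntidiag_univ_fin_eq_antidiagonalTuple] at hpow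
  have hcoeff : ((n : ℝ) - 1) * (k ! * (n - 2)! / (n + k - 1)!) =
      k ! * (n - 1)! / (n + k - 1)! := by
    obtain ⟨m, rfl⟩ : ∃ m, n = m + 2 := ⟨n - 2, by omega⟩
    rw [Nat.add_sub_cancel, show m + 2 - 1 = m + 1 by omega, Nat.factorial_succ]
    push_cast
    ring
  rw [integral_mul_fundamentalBSpline hn hlam.injective ha (continuous_pow k), hmoment, map_sub,
    map_smul, dividedDifference_eval_eq_zero hv (by rw [card_fin]; omega), hpow, sub_zero,
    smul_eq_mul, ← mul_assoc, hcoeff]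

/-- The `k`-th raw moment of the distribution with density the fundamental B-spline:
`∫ t^k M(t) dt = (k!(n−1)!/(n+k−1)!) Σ_{|β| = k} λ^β`, the sum running over all
multi-indices `β ∈ ℕⁿ` with `β_1 + ⋯ + β_n = k`. -/
theorem fundamentalBSpline_raw_moment
    (n : ℕ) (hn : 3 ≤ n) (lam : Fin n → ℝ) (hlam : StrictMono lam) (k : ℕ) (hk : 1 ≤ k) :
    (∫ t : ℝ, t ^ k * fundamentalBSpline n lam t)
      = ((Nat.factorial k * Nat.factorial (n - 1) : ℝ) / Nat.factorial (n + k - 1)) *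
          ∑ β ∈ Finset.Nat.antidiagonalTuple n k, ∏ i : Fin n, lam i ^ β i :=
  fundamentalBSpline_raw_moment_general n hn lam hlam k
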